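/- arXiv:1407.1108 — 5 statements merged into one kernel-verified Lean document; each statement's English description precedes it below -/
import Mathlib

section
/- For every real a and natural number n, the finite sum −(1/(2√π)) · Σ_{i=0}^{n} [Γ(i + 1/2)/Γ(i+1)] · (−2 i a² + 1)/(a² + 1)^{3/2 + i} equals −(1/√π) · (1/(1 + a²))^{n + 3/2} · Γ(n + 3/2)/Γ(n+1). -/
/-!
The partial sums telescope: with `x = 1 + a²` and `F s = 2 Γ(s + 3/2) / (Γ(s + 1) x^(s + 3/2))`,
the summand of index `s + 1` equals `F (s + 1) - F s`, by `Γ(z + 1) = z Γ(z)` applied to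
`z = s + 1` and `z = s + 3/2`; and the summand of index `0` equals `F 0` since `Γ(3/2) = Γ(1/2) / 2`.
-/

open Real Finset

lemma Gamma_ratio_telescope_step {t : ℝ} (ht : 0 < t + 1) {s : ℝ} (hs : 0 ≤ s) :
    2 * (Gamma (s + 3/2) / Gamma (s + 1)) / (t + 1) ^ (s + 3/2) +
        Gamma (s + 1 + 1/2) / Gamma (s + 1 + 1) *
          ((-2 * (s + 1) * t + 1) / (t + 1) ^ ((3:ℝ)/2 + (s + 1))) =
      2 * (Gamma (s + 1 + 3/2) / Gamma (s + 1 + 1)) / (t + 1) ^ (s + 1 + 3/2) := by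
  rw [show (3:ℝ)/2 + (s + 1) = s + 1 + 3/2 by ring, show s + 1 + 1/2 = s + 3/2 by ring,
    show s + 1 + 3/2 = (s + 3/2) + 1 by ring, rpow_add_one ht.ne',
    Gamma_add_one (s := s + 3/2) (by positivity), Gamma_add_one (s := s + 1) (by positivity)]
  have hΓ₁ : 0 < Gamma (s + 1) := Gamma_pos_of_pos (by positivity)
  have hΓ₂ : 0 < Gamma (s + 3/2) := Gamma_pos_of_pos (by positivity)
  have hx : 0 < (t + 1) ^ (s + 3/2) := rpow_pos_of_pos ht _
  field_simp
  ring

lemma sum_Gamma_ratio_mul_eq {t : ℝ} (ht : 0 < t + 1) (n : ℕ) :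
    ∑ i ∈ range (n + 1), Gamma (i + 1/2) / Gamma (i + 1) *
        ((-2 * i * t + 1) / (t + 1) ^ ((3:ℝ)/2 + i)) =
      2 * (Gamma (n + 3/2) / Gamma (n + 1)) / (t + 1) ^ ((n:ℝ) + 3/2) := by
  induction n with
  | zero =>
    have hΓ : Gamma (3/2) = Gamma (1/2) / 2 := by
      rw [show (3:ℝ)/2 = 1/2 + 1 by norm_num, Gamma_add_one (by norm_num)]
      ring
    simp only [zero_add, range_one, sum_singleton, Nat.cast_zero, add_zero, mul_zero, zero_mul,
      hΓ, Gamma_one]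
    ring
  | succ n ih =>
    rw [sum_range_succ, ih]
    push_cast
    exact Gamma_ratio_telescope_step ht n.cast_nonneg

theorem stmt_2 (a : ℝ) (n : ℕ) :
    -(1/(2 * Real.sqrt π)) *
      ∑ i ∈ Finset.range (n+1),
        (Real.Gamma (i + 1/2) / Real.Gamma (i + 1)) *
          ((-2 * i * a^2 + 1) / (a^2 + 1) ^ ((3:ℝ)/2 + i)) =
    -(1/Real.sqrt π) * (1/(1 + a^2)) ^ ((n:ℝ) + 3/2) *
      (Real.Gamma (n + 3/2) / Real.Gamma (n + 1)) := by
  have hx : 0 < a ^ 2 + 1 := by positivity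
  rw [sum_Gamma_ratio_mul_eq hx, add_comm 1 (a ^ 2), div_rpow zero_le_one hx.le, one_rpow]
  ring
end

section
/- For every real a and natural number n, the finite sum −(1/(2π√π)) · Σ_{i=0}^{n} [Γ(i + 3/2)/Γ(i+1)] · (−2 i a² + 3)/(a² + 1)^{5/2 + i} equals −(1/(π√π)) · (1/(1 + a²))^{n + 5/2} · Γ(n + 5/2)/Γ(n+1). -/
/-!
The summands telescope. With `x = a² + 1` and `F s = Γ(s + 3/2) / (Γ(s) x^(s + 3/2))`, the
functional equation of `Γ` turns the `i`-th summand into `2 (F (i + 1) - F i)`, and `F 0 = 0`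
because `1/Γ` vanishes at `0`. Hence the sum is `2 F (n + 1) = 2 Γ(n + 5/2) / (Γ(n + 1) x^(n + 5/2))`.
-/

open Real

lemma div_Gamma_eq_mul_div_Gamma_add_one (c s : ℝ) : c / Gamma s = s * c / Gamma (s + 1) := by
  rcases eq_or_ne s 0 with rfl | hs
  · simp [Gamma_zero]
  · rw [Gamma_add_one hs, mul_div_mul_left _ _ hs]

/-- The `F` of the header. Mathlib's `Γ 0 = 0` makes `(Γ 0)⁻¹ = 0`, the true value of `1/Γ` at `0`. -/
noncomputable def gammaDecayTerm (x s : ℝ) : ℝ :=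
  Gamma (s + 3/2) / Gamma s / x ^ (s + 3/2)

lemma gammaDecayTerm_zero (x : ℝ) : gammaDecayTerm x 0 = 0 := by
  simp [gammaDecayTerm, Gamma_zero]

lemma summand_eq_two_mul_sub_gammaDecayTerm (a : ℝ) {s : ℝ} (hs : s + 3/2 ≠ 0) :
    Gamma (s + 3/2) / Gamma (s + 1) * ((-2 * s * a^2 + 3) / (a^2 + 1) ^ ((5:ℝ)/2 + s)) =
      2 * (gammaDecayTerm (a^2 + 1) (s + 1) - gammaDecayTerm (a^2 + 1) s) := by
  have hx : 0 < a^2 + 1 := by positivity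
  have hpow : (a^2 + 1) ^ ((5:ℝ)/2 + s) = (a^2 + 1) ^ (s + 3/2) * (a^2 + 1) := by
    rw [← rpow_add_one hx.ne']; ring_nf
  have hGamma : Gamma (s + 1 + 3/2) = (s + 3/2) * Gamma (s + 3/2) := by
    rw [add_right_comm, Gamma_add_one hs]
  simp only [gammaDecayTerm, hGamma, div_Gamma_eq_mul_div_Gamma_add_one (Gamma (s + 3/2)) s]
  rw [show s + 1 + 3/2 = (5:ℝ)/2 + s by ring, hpow]
  field_simp
  ring

lemma sum_range_eq_two_mul_gammaDecayTerm (a : ℝ) (n : ℕ) :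
    ∑ i ∈ Finset.range (n+1),
        (Gamma (i + 3/2) / Gamma (i + 1)) * ((-2 * i * a^2 + 3) / (a^2 + 1) ^ ((5:ℝ)/2 + i)) =
      2 * gammaDecayTerm (a^2 + 1) (n + 1) := by
  simp (disch := positivity) only [summand_eq_two_mul_sub_gammaDecayTerm, ← Finset.mul_sum]
  have htelescope := Finset.sum_range_sub (fun i : ℕ => gammaDecayTerm (a^2 + 1) i) (n + 1)
  push_cast at htelescope
  rw [htelescope, gammaDecayTerm_zero, sub_zero]

theorem stmt_4 (a : ℝ) (n : ℕ) :
    -(1/(2 * π * Real.sqrt π)) *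
      ∑ i ∈ Finset.range (n+1),
        (Real.Gamma (i + 3/2) / Real.Gamma (i + 1)) *
          ((-2 * i * a^2 + 3) / (a^2 + 1) ^ ((5:ℝ)/2 + i)) =
    -(1/(π * Real.sqrt π)) * (1/(1 + a^2)) ^ ((n:ℝ) + 5/2) *
      (Real.Gamma (n + 5/2) / Real.Gamma (n + 1)) := by
  have hx : 0 < a^2 + 1 := by positivity
  rw [sum_range_eq_two_mul_gammaDecayTerm, gammaDecayTerm, add_comm 1 (a^2), one_div (a^2 + 1), inv_rpow hx.le,
    show (n:ℝ) + 1 + 3/2 = n + 5/2 by ring]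
  field_simp
end

section
/- For every ε > 0 and natural number n, the integral over ℝ of Δ G^{ε,n} equals −1 in one dimension; that is, 2 ∫_0^∞ (1/(ε√π)) (1/(1 + r²/ε²))^{n + 3/2} · Γ(n + 3/2)/Γ(n+1) dr = 1. -/
/-!
After the substitution `r = ε u` the claim reads `J(n + 3/2) Γ(n + 3/2) / Γ(n + 1) = √π / 2`, where
`J(a) = ∫₀^∞ (1 + u²)^(-a) du`. Integrating the derivative of `u (1 + u²)^(-a)` over `(0, ∞)` gives
`J(3/2) = 1` and the reduction formula `2a J(a + 1) = (2a - 1) J(a)` for `a > 1/2`, which makes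
`J(a) Γ(a) / Γ(a - 1/2)` invariant under `a ↦ a + 1`; at `a = 3/2` it equals `Γ(3/2) = √π / 2`.
-/

open Real MeasureTheory Set Filter Topology

lemma integrable_one_add_sq_rpow_neg {a : ℝ} (ha : 1 / 2 < a) :
    Integrable fun u : ℝ => (1 + u ^ 2) ^ (-a) := by
  have := integrable_rpow_neg_one_add_norm_sq (E := ℝ) (μ := volume) (r := 2 * a)
    (by simp; linarith)
  simpa [neg_div, mul_div_cancel_left₀] using this

lemma hasDerivAt_mul_one_add_sq_rpow_neg (a u : ℝ) :
    HasDerivAt (fun u : ℝ => u * (1 + u ^ 2) ^ (-a))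
      ((1 - 2 * a) * (1 + u ^ 2) ^ (-a) + 2 * a * (1 + u ^ 2) ^ (-(a + 1))) u := by
  have hpos : 0 < 1 + u ^ 2 := by positivity
  have hpow : HasDerivAt (fun u : ℝ => (1 + u ^ 2) ^ (-a))
      (2 * u * (-a) * (1 + u ^ 2) ^ (-(a + 1))) u := by
    have h : HasDerivAt (fun u : ℝ => 1 + u ^ 2) (2 * u) u := by
      simpa using (hasDerivAt_pow 2 u).const_add 1
    simpa [sub_eq_add_neg, add_comm] using h.rpow_const (p := -a) (Or.inl hpos.ne')
  have hsplit : (1 + u ^ 2) ^ (-a) = (1 + u ^ 2) * (1 + u ^ 2) ^ (-(a + 1)) := by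
    have h := rpow_add hpos 1 (-(a + 1))
    rw [rpow_one, show (1 : ℝ) + -(a + 1) = -a by ring] at h
    exact h
  refine ((hasDerivAt_id u).mul hpow).congr_deriv ?_
  rw [hsplit, id]
  ring

lemma tendsto_mul_one_add_sq_rpow_neg_atTop {a : ℝ} (ha : 1 / 2 < a) :
    Tendsto (fun u : ℝ => u * (1 + u ^ 2) ^ (-a)) atTop (𝓝 0) := by
  refine squeeze_zero' ?_ ?_ (tendsto_rpow_neg_atTop (by linarith : 0 < 2 * a - 1))
  · filter_upwards [eventually_ge_atTop 0] with u hu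
    positivity
  · filter_upwards [eventually_gt_atTop 0] with u hu
    calc u * (1 + u ^ 2) ^ (-a) ≤ u * (u ^ 2) ^ (-a) := by
          refine mul_le_mul_of_nonneg_left ?_ hu.le
          exact rpow_le_rpow_of_nonpos (by positivity) (by linarith) (by linarith)
      _ = u ^ (-(2 * a - 1)) := by
          have h := rpow_add hu 1 (2 * -a)
          rw [rpow_one] at h
          rw [← rpow_natCast, ← rpow_mul hu.le, Nat.cast_ofNat, ← h]
          ring_nf

lemma tendsto_mul_one_add_sq_rpow_neg_half_atTop :
    Tendsto (fun u : ℝ => u * (1 + u ^ 2) ^ (-(1 / 2 : ℝ))) atTop (𝓝 1) := by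
  have hcont : Tendsto (fun v : ℝ => (1 + v ^ 2) ^ (-(1 / 2 : ℝ))) (𝓝 0) (𝓝 1) := by
    have : Continuous fun v : ℝ => (1 + v ^ 2) ^ (-(1 / 2 : ℝ)) :=
      Continuous.rpow_const (by fun_prop) fun v => Or.inl (by positivity)
    simpa using this.tendsto 0
  refine (hcont.comp tendsto_inv_atTop_zero).congr' ?_
  filter_upwards [eventually_gt_atTop 0] with u hu
  have hsq : 1 + u⁻¹ ^ 2 = (1 + u ^ 2) * (u ^ 2)⁻¹ := by field_simp; ring
  have hsqrt : ((u ^ 2)⁻¹) ^ (-(1 / 2 : ℝ)) = u := by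
    rw [inv_rpow (by positivity), ← rpow_neg (by positivity), neg_neg, ← sqrt_eq_rpow,
      sqrt_sq hu.le]
  simp only [Function.comp_apply]
  rw [hsq, mul_rpow (by positivity) (by positivity), hsqrt, mul_comm]

lemma integral_Ioi_one_add_sq_rpow_neg_three_halves :
    ∫ u in Ioi (0 : ℝ), (1 + u ^ 2) ^ (-(3 / 2 : ℝ)) = 1 := by
  have hderiv (u : ℝ) : HasDerivAt (fun u : ℝ => u * (1 + u ^ 2) ^ (-(1 / 2 : ℝ)))
      ((1 + u ^ 2) ^ (-(3 / 2 : ℝ))) u := by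
    convert hasDerivAt_mul_one_add_sq_rpow_neg (1 / 2) u using 1
    norm_num
  have key := integral_Ioi_of_hasDerivAt_of_tendsto (hderiv 0).continuousAt.continuousWithinAt
    (fun u _ => hderiv u) (integrable_one_add_sq_rpow_neg (by norm_num)).integrableOn
    tendsto_mul_one_add_sq_rpow_neg_half_atTop
  simpa using key

lemma integral_Ioi_one_add_sq_rpow_neg_add_one {a : ℝ} (ha : 1 / 2 < a) :
    2 * a * ∫ u in Ioi (0 : ℝ), (1 + u ^ 2) ^ (-(a + 1)) =
      (2 * a - 1) * ∫ u in Ioi (0 : ℝ), (1 + u ^ 2) ^ (-a) := by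
  have hint := (integrable_one_add_sq_rpow_neg ha).integrableOn (s := Ioi 0)
  have hint' := (integrable_one_add_sq_rpow_neg (by linarith : 1 / 2 < a + 1)).integrableOn
    (s := Ioi 0)
  have key := integral_Ioi_of_hasDerivAt_of_tendsto
    (hasDerivAt_mul_one_add_sq_rpow_neg a 0).continuousAt.continuousWithinAt
    (fun u _ => hasDerivAt_mul_one_add_sq_rpow_neg a u)
    ((hint.const_mul _).add (hint'.const_mul _)) (tendsto_mul_one_add_sq_rpow_neg_atTop ha)
  rw [integral_add (hint.const_mul _) (hint'.const_mul _), integral_const_mul,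
    integral_const_mul] at key
  simp only [zero_mul, sub_zero] at key
  linarith

lemma integral_Ioi_one_add_sq_rpow_neg_add_one_mul_Gamma_div {a : ℝ} (ha : 1 / 2 < a) :
    (∫ u in Ioi (0 : ℝ), (1 + u ^ 2) ^ (-(a + 1))) * (Gamma (a + 1) / Gamma (a + 1 / 2)) =
      (∫ u in Ioi (0 : ℝ), (1 + u ^ 2) ^ (-a)) * (Gamma a / Gamma (a - 1 / 2)) := by
  have hΓ : Gamma (a - 1 / 2) ≠ 0 := (Gamma_pos_of_pos (by linarith)).ne'
  have ha' : a - 1 / 2 ≠ 0 := by linarith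
  rw [Gamma_add_one (by linarith), show a + 1 / 2 = a - 1 / 2 + 1 by ring,
    Gamma_add_one (by linarith)]
  have hrec := integral_Ioi_one_add_sq_rpow_neg_add_one ha
  rw [mul_div_assoc', mul_div_assoc', div_eq_div_iff (mul_ne_zero ha' hΓ) hΓ]
  linear_combination (Gamma a * Gamma (a - 1 / 2) / 2) * hrec

lemma integral_Ioi_one_add_sq_rpow_neg_mul_Gamma_div (n : ℕ) :
    (∫ u in Ioi (0 : ℝ), (1 + u ^ 2) ^ (-((n : ℝ) + 3 / 2))) *
      (Gamma (n + 3 / 2) / Gamma (n + 1)) = √π / 2 := by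
  induction n with
  | zero =>
    rw [Nat.cast_zero, zero_add, zero_add, integral_Ioi_one_add_sq_rpow_neg_three_halves,
      show (3 / 2 : ℝ) = 1 / 2 + 1 by norm_num, Gamma_add_one (by norm_num),
      Gamma_one_half_eq, Gamma_one]
    ring
  | succ n ih =>
    have h := integral_Ioi_one_add_sq_rpow_neg_add_one_mul_Gamma_div
      (a := n + 3 / 2) (by linarith [(n.cast_nonneg : (0 : ℝ) ≤ n)])
    rw [show (n : ℝ) + 3 / 2 - 1 / 2 = n + 1 by ring, ih] at h
    rw [← h]
    push_cast
    ring_nf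

theorem stmt_5 (ε : ℝ) (hε : 0 < ε) (n : ℕ) :
    2 * ∫ r in Set.Ioi (0:ℝ),
        (1/(ε * Real.sqrt π)) * (1/(1 + r^2/ε^2)) ^ ((n:ℝ) + 3/2) *
          (Real.Gamma (n + 3/2) / Real.Gamma (n + 1)) = 1 := by
  set s : ℝ := n + 3 / 2
  have hrescale (r : ℝ) : (1 / (1 + r ^ 2 / ε ^ 2)) ^ s = (1 + (ε⁻¹ * r) ^ 2) ^ (-s) := by
    rw [one_div, inv_rpow (by positivity), ← rpow_neg (by positivity), mul_pow, inv_pow,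
      inv_mul_eq_div]
  simp_rw [hrescale, mul_right_comm _ _ (Gamma s / _), integral_const_mul]
  rw [integral_comp_mul_left_Ioi (fun u => (1 + u ^ 2) ^ (-s)) 0 (inv_pos.mpr hε), mul_zero,
    inv_inv, smul_eq_mul]
  have hJ : (∫ u in Ioi (0 : ℝ), (1 + u ^ 2) ^ (-s)) * (Gamma s / Gamma (n + 1)) = √π / 2 :=
    integral_Ioi_one_add_sq_rpow_neg_mul_Gamma_div n
  calc _ = 2 / √π * ((∫ u in Ioi (0 : ℝ), (1 + u ^ 2) ^ (-s)) * (Gamma s / Gamma (n + 1))) := by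
        field_simp
    _ = 1 := by rw [hJ]; field_simp
end

section
/- For every ε > 0 and every r ≠ 0, the 1D Laplacian Δ G^{ε,n}(r) = −(ε^{2n+2}/√π) (1/(ε² + r²))^{n + 3/2} Γ(n + 3/2)/Γ(n+1) tends to 0 as n → ∞. -/
/-! With `q = ε² / (ε² + r²) < 1` the sequence is
`-(π (ε² + r²))^(-1/2) q^(n+1) Γ(n + 3/2) / Γ(n + 1)`. Log-convexity of `Γ` gives
`Γ(x + 1/2) ≤ √x Γ(x)`, so the Gamma ratio grows at most linearly,
which the geometric factor `q^(n+1)` beats. -/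

open Real Filter Topology

namespace Real

theorem Gamma_add_half_le_sqrt_mul_Gamma {x : ℝ} (hx : 0 < x) :
    Gamma (x + 1 / 2) ≤ √x * Gamma x := by
  have hconv := Gamma_mul_add_mul_le_rpow_Gamma_mul_rpow_Gamma hx (by positivity : 0 < x + 1)
    (by norm_num : (0 : ℝ) < 1 / 2) (by norm_num : (0 : ℝ) < 1 / 2) (by norm_num)
  have hΓ : 0 ≤ Gamma x := (Gamma_pos_of_pos hx).le
  rw [Gamma_add_one hx.ne', mul_rpow hx.le hΓ, ← sqrt_eq_rpow, ← sqrt_eq_rpow,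
    ← mul_assoc, mul_comm _ √x, mul_assoc, ← sq, sq_sqrt hΓ] at hconv
  convert hconv using 2
  ring

theorem Gamma_add_half_div_Gamma_le_self {x : ℝ} (hx : 1 ≤ x) :
    Gamma (x + 1 / 2) / Gamma x ≤ x := by
  have hx0 : 0 < x := by linarith
  rw [div_le_iff₀ (Gamma_pos_of_pos hx0)]
  calc Gamma (x + 1 / 2) ≤ √x * Gamma x := Gamma_add_half_le_sqrt_mul_Gamma hx0
    _ ≤ x * Gamma x := by
      gcongr
      exact (sqrt_le_left hx0.le).2 (by nlinarith)

end Real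

theorem tendsto_pow_mul_Gamma_add_half_div_Gamma {q : ℝ} (hq₀ : 0 ≤ q) (hq₁ : q < 1) :
    Tendsto (fun n : ℕ => q ^ n * (Gamma (n + 1 / 2) / Gamma n)) atTop (𝓝 0) := by
  refine squeeze_zero' ?_ ?_ (tendsto_self_mul_const_pow_of_lt_one hq₀ hq₁)
  · filter_upwards [eventually_gt_atTop 0] with n hn
    have hn' : (0 : ℝ) < n := by exact_mod_cast hn
    exact mul_nonneg (pow_nonneg hq₀ n)
      (div_nonneg (Gamma_pos_of_pos (by positivity)).le (Gamma_pos_of_pos hn').le)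
  · filter_upwards [eventually_ge_atTop 1] with n hn
    rw [mul_comm (n : ℝ)]
    exact mul_le_mul_of_nonneg_left (Gamma_add_half_div_Gamma_le_self (by exact_mod_cast hn))
      (pow_nonneg hq₀ n)

theorem pow_mul_one_div_rpow_add_three_halves {A : ℝ} (hA : 0 < A) (ε : ℝ) (n : ℕ) :
    ε ^ (2 * n + 2) * (1 / A) ^ ((n : ℝ) + 3 / 2) = (ε ^ 2 / A) ^ (n + 1) / √A := by
  rw [show (n : ℝ) + 3 / 2 = ((n + 1 : ℕ) : ℝ) + 1 / 2 by push_cast; ring,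
    rpow_add (by positivity), rpow_natCast, ← sqrt_eq_rpow, show 2 * n + 2 = 2 * (n + 1) by ring,
    pow_mul, one_div, sqrt_inv, div_pow, inv_pow]
  ring

theorem stmt_8_general (ε r : ℝ) (hr : r ≠ 0) :
    Filter.Tendsto
      (fun n : ℕ =>
        -(ε^(2*n+2)/Real.sqrt π) * (1/(ε^2 + r^2)) ^ ((n:ℝ) + 3/2) *
          (Real.Gamma (n + 3/2) / Real.Gamma (n + 1)))
      Filter.atTop (nhds 0) := by
  set A := ε ^ 2 + r ^ 2
  have hA : 0 < A := by positivity
  have hq₁ : ε ^ 2 / A < 1 := (div_lt_one hA).2 (lt_add_of_pos_right _ (by positivity))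
  have hlim := ((tendsto_pow_mul_Gamma_add_half_div_Gamma (by positivity) hq₁).comp
    (tendsto_add_atTop_nat 1)).const_mul (-(1 / (√π * √A)))
  rw [mul_zero] at hlim
  refine hlim.congr fun n => ?_
  have hpow := pow_mul_one_div_rpow_add_three_halves hA ε n
  simp only [Function.comp_apply]
  push_cast
  rw [show (n : ℝ) + 1 + 1 / 2 = n + 3 / 2 by ring]
  linear_combination (Gamma (n + 3 / 2) / Gamma (n + 1)) / √π * hpow

theorem stmt_8 (ε r : ℝ) (hε : 0 < ε) (hr : r ≠ 0) :
    Filter.Tendsto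
      (fun n : ℕ =>
        -(ε^(2*n+2)/Real.sqrt π) * (1/(ε^2 + r^2)) ^ ((n:ℝ) + 3/2) *
          (Real.Gamma (n + 3/2) / Real.Gamma (n + 1)))
      Filter.atTop (nhds 0) :=
  stmt_8_general ε r hr
end

section
/- For every z with 0 < z < 1, the series 2 Σ_{i=1}^{∞} binom(1/2, i) (−1)^i (z^{i − 1/2} − 1) converges and equals 2(1 − √z/(1 + √(1 − z))). -/
/-!
Writing `cᵢ = (-1)ⁱ binom(1/2, i)`, the series is `(2/√z) ∑_{i ≥ 1} cᵢ zⁱ - 2 ∑_{i ≥ 1} cᵢ`.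
The first sum is the binomial series of `√(1 - z)` without its constant term. For the second,
Pascal's rule gives `c_{n+1} = a_{n+1} - a_n` with `a_n = (-1)ⁿ binom(-1/2, n) = (2n choose n)/4ⁿ`,
which decreases to `0` (indeed `a_n² ≤ 1/(n+1)`), so it telescopes to `-1`. The value
`2 + 2(√(1 - z) - 1)/√z` is the claimed one because `(1 - √(1 - z))(1 + √(1 - z)) = z`.
-/

open Real

noncomputable def genBinom (α : ℝ) (i : ℕ) : ℝ :=
  (∏ k ∈ Finset.range i, (α - k)) / (Nat.factorial i)

open Filter Topology Finset

theorem hasSum_sub_succ_of_antitone {f : ℕ → ℝ} {l : ℝ} (hf : Antitone f)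
    (hl : Tendsto f atTop (𝓝 l)) : HasSum (fun n => f n - f (n + 1)) (f 0 - l) := by
  refine (hasSum_iff_tendsto_nat_of_nonneg (fun n => sub_nonneg.2 (hf n.le_succ)) _).2 ?_
  simp only [sum_range_sub']
  exact hl.const_sub _

theorem genBinom_eq_ringChoose (a : ℝ) (n : ℕ) : genBinom a n = Ring.choose a n := by
  rw [genBinom, Ring.choose_eq_smul, ← Polynomial.aeval_eq_smeval,
    ← descPochhammer_eval_eq_prod_range, smul_eq_mul, div_eq_inv_mul]
  simp [Polynomial.aeval_def, Polynomial.eval₂_eq_eval_map, descPochhammer_map]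

theorem hasSum_genBinom_mul_pow (a : ℝ) {x : ℝ} (hx : |x| < 1) :
    HasSum (fun n => genBinom a n * x ^ n) ((1 + x) ^ a) := by
  have hx' : x ∈ Metric.eball (0 : ℝ) 1 := by
    simpa [Metric.mem_eball, enorm_eq_nnnorm, ← NNReal.coe_lt_coe] using hx
  simpa [genBinom_eq_ringChoose, binomialSeries, FormalMultilinearSeries.coeff_ofScalars,
    mul_comm] using Real.one_add_rpow_hasFPowerSeriesOnBall_zero.hasSum hx'

noncomputable def altGenBinom (a : ℝ) (n : ℕ) : ℝ := (-1) ^ n * genBinom a n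

theorem altGenBinom_zero (a : ℝ) : altGenBinom a 0 = 1 := by
  simp [altGenBinom, genBinom]

theorem altGenBinom_succ (a : ℝ) (n : ℕ) :
    altGenBinom a (n + 1) = altGenBinom a n * ((n - a) / (n + 1)) := by
  simp only [altGenBinom, genBinom, prod_range_succ, Nat.factorial_succ, Nat.cast_mul,
    pow_succ]
  push_cast
  field_simp
  ring

theorem altGenBinom_add_one_succ (a : ℝ) (n : ℕ) :
    altGenBinom (a + 1) (n + 1) = altGenBinom a (n + 1) - altGenBinom a n := by
  simp only [altGenBinom, genBinom_eq_ringChoose, Ring.choose_succ_succ, pow_succ]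
  ring

theorem hasSum_altGenBinom_mul_pow (a : ℝ) {x : ℝ} (hx : |x| < 1) :
    HasSum (fun n => altGenBinom a n * x ^ n) ((1 - x) ^ a) := by
  have h := hasSum_genBinom_mul_pow a (x := -x) (by rwa [abs_neg])
  rw [← sub_eq_add_neg] at h
  exact h.congr_fun fun n => by rw [altGenBinom, neg_pow]; ring

theorem altGenBinom_nonneg {a : ℝ} (ha : a ≤ 0) (n : ℕ) : 0 ≤ altGenBinom a n := by
  induction n with
  | zero => simp [altGenBinom_zero]
  | succ n ih =>
    rw [altGenBinom_succ]
    exact mul_nonneg ih (div_nonneg (by linarith [n.cast_nonneg (α := ℝ)]) (by positivity))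

theorem altGenBinom_antitone {a : ℝ} (ha₁ : -1 ≤ a) (ha₀ : a ≤ 0) : Antitone (altGenBinom a) := by
  refine antitone_nat_of_succ_le fun n => ?_
  rw [altGenBinom_succ]
  refine mul_le_of_le_one_right (altGenBinom_nonneg ha₀ n) ?_
  rw [div_le_one (by positivity)]
  linarith

theorem altGenBinom_neg_half_sq_le (n : ℕ) : altGenBinom (-1/2) n ^ 2 ≤ 1 / (n + 1) := by
  induction n with
  | zero => simp [altGenBinom_zero]
  | succ n ih =>
    rw [altGenBinom_succ, mul_pow]
    calc altGenBinom (-1/2) n ^ 2 * ((n - -1/2) / (n + 1)) ^ 2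
        ≤ 1 / (n + 1) * ((n - -1/2) / (n + 1)) ^ 2 := by gcongr
      _ ≤ 1 / (((n + 1 : ℕ) : ℝ) + 1) := by
        push_cast
        field_simp
        nlinarith [n.cast_nonneg (α := ℝ)]

theorem tendsto_altGenBinom_neg_half : Tendsto (altGenBinom (-1/2)) atTop (𝓝 0) := by
  have hsq : Tendsto (fun n => altGenBinom (-1/2) n ^ 2) atTop (𝓝 0) :=
    squeeze_zero (fun n => sq_nonneg _) altGenBinom_neg_half_sq_le
      tendsto_one_div_add_atTop_nhds_zero_nat
  have h := hsq.sqrt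
  rw [sqrt_zero] at h
  exact h.congr fun n => sqrt_sq (altGenBinom_nonneg (by norm_num) n)

theorem hasSum_altGenBinom_half_succ : HasSum (fun n => altGenBinom (1/2) (n + 1)) (-1) := by
  have h := (hasSum_sub_succ_of_antitone (altGenBinom_antitone (by norm_num) (by norm_num))
    tendsto_altGenBinom_neg_half).neg
  rw [altGenBinom_zero, sub_zero] at h
  refine h.congr_fun fun n => ?_
  rw [show (1/2 : ℝ) = -1/2 + 1 by norm_num, altGenBinom_add_one_succ]
  ring

theorem stmt_10 (z : ℝ) (hz0 : 0 < z) (hz1 : z < 1) :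
    HasSum
      (fun i : ℕ =>
        2 * genBinom (1/2) (i+1) * (-1)^(i+1) * (z ^ ((i:ℝ) + 1 - 1/2) - 1))
      (2 * (1 - Real.sqrt z / (1 + Real.sqrt (1 - z)))) := by
  have hinterior : HasSum (fun n => altGenBinom (1/2) (n + 1) * z ^ (n + 1)) (√(1 - z) - 1) := by
    have h := hasSum_altGenBinom_mul_pow (1/2) (x := z) (by rw [abs_lt]; constructor <;> linarith)
    rw [← sqrt_eq_rpow] at h
    simpa [altGenBinom_zero] using (hasSum_nat_add_iff' 1).2 h
  have hterm : ∀ i : ℕ, 2 * genBinom (1/2) (i+1) * (-1)^(i+1) * (z ^ ((i:ℝ) + 1 - 1/2) - 1) =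
      2 / √z * (altGenBinom (1/2) (i + 1) * z ^ (i + 1)) - 2 * altGenBinom (1/2) (i + 1) := by
    intro i
    rw [rpow_sub hz0, ← Nat.cast_add_one, rpow_natCast, ← sqrt_eq_rpow, altGenBinom]
    ring
  have hs : √(1 - z) ^ 2 = 1 - z := sq_sqrt (by linarith)
  have ht : √z ^ 2 = z := sq_sqrt hz0.le
  have hvalue : 2 / √z * (√(1 - z) - 1) - 2 * -1 = 2 * (1 - √z / (1 + √(1 - z))) := by
    have hsqrt_pos : 0 < √z := sqrt_pos.2 hz0
    field_simp
    nlinarith [sqrt_nonneg (1 - z)]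
  simpa only [hterm, hvalue] using
    (hinterior.mul_left (2 / √z)).sub (hasSum_altGenBinom_half_succ.mul_left 2)
end
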